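/- arXiv:2304.06594 — 2 statements merged into one kernel-verified Lean document; each statement's English description precedes it below -/
import Mathlib

section
/- Let n, k be positive integers, A ∈ ℝ^{n×n×n}, and V*, W* ∈ ℝ^{n×k²}. Then for every matrix Û ∈ ℝ^{n×k²}, min_{V ∈ ℝ^{n×k²}} ‖V · Z₂(Û, W*) − A₂‖_F² ≤ ‖Û · Z₁(V*, W*) − A₁‖_F², where A₁ and A₂ are the mode-1 and mode-2 unfoldings of A. -/
open MeasureTheory ProbabilityTheory
open scoped ENNReal NNReal

abbrev Tensor3 (n : ℕ) := Fin n → Fin n → Fin n → ℝ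

/-- Squared Frobenius norm of a third-order tensor. -/
noncomputable def tFrobSq {n : ℕ} (A : Tensor3 n) : ℝ :=
  ∑ a, ∑ b, ∑ c, (A a b c) ^ 2

/-- Frobenius norm of a third-order tensor. -/
noncomputable def tFrobNorm {n : ℕ} (A : Tensor3 n) : ℝ := Real.sqrt (tFrobSq A)

/-- Squared Frobenius norm of a matrix. -/
noncomputable def frobSq {α β : Type*} [Fintype α] [Fintype β] (M : Matrix α β ℝ) : ℝ :=
  ∑ i, ∑ j, (M i j) ^ 2

/-- Frobenius norm of a matrix. -/
noncomputable def frobNorm {α β : Type*} [Fintype α] [Fintype β] (M : Matrix α β ℝ) : ℝ :=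
  Real.sqrt (frobSq M)

/-- Squared Euclidean norm of a vector. -/
noncomputable def vecNormSq {α : Type*} [Fintype α] (v : α → ℝ) : ℝ := ∑ i, (v i) ^ 2

/-- The cycle tensor `T(U,V,W)`: the column of index `i + k(j-1)` (1-indexed) is encoded by the
pair `(i, j) : Fin k × Fin k`. -/
def cycleT {n k : ℕ} (U V W : Matrix (Fin n) (Fin k × Fin k) ℝ) : Tensor3 n :=
  fun a b c => ∑ i : Fin k, ∑ j : Fin k, ∑ l : Fin k, U a (i, j) * V b (j, l) * W c (l, i)

/-- A tensor has cycle-rank at most `k`. -/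
def cycleRankLE (n k : ℕ) (A' : Tensor3 n) : Prop :=
  ∃ U V W : Matrix (Fin n) (Fin k × Fin k) ℝ, A' = cycleT U V W

/-- Mode-1 unfolding: `(A₁)_{a,(b,c)} = A_{a,b,c}`. -/
def unfold1 {n : ℕ} (A : Tensor3 n) : Matrix (Fin n) (Fin n × Fin n) ℝ :=
  fun a p => A a p.1 p.2

/-- Mode-2 unfolding: `(A₂)_{b,(c,a)} = A_{a,b,c}`. -/
def unfold2 {n : ℕ} (A : Tensor3 n) : Matrix (Fin n) (Fin n × Fin n) ℝ :=
  fun b p => A p.2 b p.1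

/-- Mode-3 unfolding: `(A₃)_{c,(a,b)} = A_{a,b,c}`. -/
def unfold3 {n : ℕ} (A : Tensor3 n) : Matrix (Fin n) (Fin n × Fin n) ℝ :=
  fun c p => A p.1 p.2 c

/-- `Z₁(V,W)`: row `(i,j)`, column `(b,c)`, entry `Σ_l V_{b,(j,l)} W_{c,(l,i)}`. -/
def Z1 {n k : ℕ} (V W : Matrix (Fin n) (Fin k × Fin k) ℝ) :
    Matrix (Fin k × Fin k) (Fin n × Fin n) ℝ :=
  fun ij bc => ∑ l : Fin k, V bc.1 (ij.2, l) * W bc.2 (l, ij.1)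

/-- `Z₂(U,W)`: row `(j,l)`, column `(c,a)`, entry `Σ_i W_{c,(l,i)} U_{a,(i,j)}`. -/
def Z2 {n k : ℕ} (U W : Matrix (Fin n) (Fin k × Fin k) ℝ) :
    Matrix (Fin k × Fin k) (Fin n × Fin n) ℝ :=
  fun jl ca => ∑ i : Fin k, W ca.1 (jl.2, i) * U ca.2 (i, jl.1)

/-- `Z₃(U,V)`: row `(l,i)`, column `(a,b)`, entry `Σ_j U_{a,(i,j)} V_{b,(j,l)}`. -/
def Z3 {n k : ℕ} (U V : Matrix (Fin n) (Fin k × Fin k) ℝ) :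
    Matrix (Fin k × Fin k) (Fin n × Fin n) ℝ :=
  fun li ab => ∑ j : Fin k, U ab.1 (li.2, j) * V ab.2 (j, li.1)

/-- `Σ_{i=1}^k (M₁)_i ⊗ (M₂)_i ⊗ (M₃)_i`. -/
def rankOneSum {m k : ℕ} (M₁ M₂ M₃ : Matrix (Fin m) (Fin k) ℝ) : Tensor3 m :=
  fun a b c => ∑ i : Fin k, M₁ a i * M₂ b i * M₃ c i

/-- CountSketch matrix built from a hash function `h` and signs `sgn` (`true ↦ +1`). -/
def countSketch {t n : ℕ} (h : Fin n → Fin t) (sgn : Fin n → Bool) :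
    Matrix (Fin t) (Fin n) ℝ :=
  fun j i => if h i = j then (if sgn i then 1 else -1) else 0

/-- The law of a random matrix with i.i.d. `N(0, v)` entries, as a measure on `α → β → ℝ`. -/
noncomputable def gaussianMatrixMeasure (α β : Type*) [Fintype α] [Fintype β] (v : ℝ≥0) :
    Measure (α → β → ℝ) :=
  Measure.pi fun _ : α => Measure.pi fun _ : β => gaussianReal 0 v

instance (α β : Type*) [Fintype α] [Fintype β] (v : ℝ≥0) :
    IsProbabilityMeasure (gaussianMatrixMeasure α β v) := by
  unfold gaussianMatrixMeasure; infer_instance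

/-- Uniform probability measure on a finite type. -/
noncomputable def uniformMeasure (α : Type*) [Fintype α] [MeasurableSpace α] : Measure α :=
  ((Fintype.card α : ℝ≥0∞))⁻¹ • Measure.count

instance (α : Type*) [Fintype α] [MeasurableSpace α] : SFinite (uniformMeasure α) := by
  unfold uniformMeasure; infer_instance

/-- The law of a CountSketch matrix: uniform hash function together with uniform signs. -/
noncomputable def countSketchMeasure (t n : ℕ) :
    Measure ((Fin n → Fin t) × (Fin n → Bool)) :=
  (uniformMeasure (Fin n → Fin t)).prod (uniformMeasure (Fin n → Bool))

instance (t n : ℕ) : SFinite (countSketchMeasure t n) := by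
  unfold countSketchMeasure; infer_instance

/-- for every `Û`,
`min_V ‖V·Z₂(Û,W*) − A₂‖_F² ≤ ‖Û·Z₁(V*,W*) − A₁‖_F²`. -/
theorem step2_min_le_step1 (n k : ℕ) (hn : 0 < n) (hk : 0 < k) (A : Tensor3 n)
    (Vstar Wstar : Matrix (Fin n) (Fin k × Fin k) ℝ)
    (Uhat : Matrix (Fin n) (Fin k × Fin k) ℝ) :
    (⨅ V : Matrix (Fin n) (Fin k × Fin k) ℝ, frobSq (V * Z2 Uhat Wstar - unfold2 A)) ≤
      frobSq (Uhat * Z1 Vstar Wstar - unfold1 A) := by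
  have key : frobSq (Vstar * Z2 Uhat Wstar - unfold2 A) =
      frobSq (Uhat * Z1 Vstar Wstar - unfold1 A) := by
    have hL : ∀ b c a, (Vstar * Z2 Uhat Wstar - unfold2 A) b (c, a) =
        cycleT Uhat Vstar Wstar a b c - A a b c := by
      intro b c a
      simp only [Matrix.sub_apply, Matrix.mul_apply, unfold2, Z2, cycleT,
        Fintype.sum_prod_type, Finset.sum_mul, Finset.mul_sum]
      congr 1
      rw [Finset.sum_comm]
      refine Eq.trans (Finset.sum_congr rfl fun _ _ => by rw [Finset.sum_comm]) ?_
      rw [Finset.sum_comm]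
      refine Eq.trans (Finset.sum_congr rfl fun _ _ => by rw [Finset.sum_comm]) ?_
      exact Finset.sum_congr rfl fun i _ => Finset.sum_congr rfl fun j _ =>
        Finset.sum_congr rfl fun l _ => by ring
    have hR : ∀ a b c, (Uhat * Z1 Vstar Wstar - unfold1 A) a (b, c) =
        cycleT Uhat Vstar Wstar a b c - A a b c := by
      intro a b c
      simp only [Matrix.sub_apply, Matrix.mul_apply, unfold1, Z1, cycleT,
        Fintype.sum_prod_type, Finset.sum_mul, Finset.mul_sum]
      congr 1
      exact Finset.sum_congr rfl fun i _ => Finset.sum_congr rfl fun j _ =>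
        Finset.sum_congr rfl fun l _ => by ring
    unfold frobSq
    simp only [Fintype.sum_prod_type, hL, hR]
    rw [Finset.sum_comm]
    refine Eq.trans (Finset.sum_congr rfl fun _ _ => by rw [Finset.sum_comm]) ?_
    rw [Finset.sum_comm]
    exact Finset.sum_congr rfl fun _ _ => by rw [Finset.sum_comm]
  rw [← key]
  apply ciInf_le
  exact ⟨0, fun x ⟨V, hV⟩ => hV ▸ Finset.sum_nonneg fun i _ =>
    Finset.sum_nonneg fun j _ => sq_nonneg _⟩
end

section
/- Let n, k be positive integers, A ∈ ℝ^{n×n×n}, and W* ∈ ℝ^{n×k²}. Then for all matrices Û, V̂ ∈ ℝ^{n×k²}, min_{W ∈ ℝ^{n×k²}} ‖W · Z₃(Û, V̂) − A₃‖_F² ≤ ‖V̂ · Z₂(Û, W*) − A₂‖_F², where A₂ and A₃ are the mode-2 and mode-3 unfoldings of A. -/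
open MeasureTheory ProbabilityTheory
open scoped ENNReal NNReal

lemma sum_rot3 {α β γ M : Type*} [Fintype α] [Fintype β] [Fintype γ]
    [AddCommMonoid M] (f : α → β → γ → M) :
    (∑ a, ∑ b, ∑ c, f a b c) = ∑ c, ∑ a, ∑ b, f a b c :=
  (Finset.sum_congr rfl fun _ _ => Finset.sum_comm).trans Finset.sum_comm

/-- for all `Û, V̂`,
`min_W ‖W·Z₃(Û,V̂) − A₃‖_F² ≤ ‖V̂·Z₂(Û,W*) − A₂‖_F²`. -/
theorem step3_min_le_step2 (n k : ℕ) (hn : 0 < n) (hk : 0 < k) (A : Tensor3 n)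
    (Wstar : Matrix (Fin n) (Fin k × Fin k) ℝ)
    (Uhat Vhat : Matrix (Fin n) (Fin k × Fin k) ℝ) :
    (⨅ W : Matrix (Fin n) (Fin k × Fin k) ℝ, frobSq (W * Z3 Uhat Vhat - unfold3 A)) ≤
      frobSq (Vhat * Z2 Uhat Wstar - unfold2 A) := by
  have hpt : ∀ (a b c : Fin n),
      (Wstar * Z3 Uhat Vhat - unfold3 A) c (a, b)
        = (Vhat * Z2 Uhat Wstar - unfold2 A) b (c, a) := by
    intro a b c
    simp only [Matrix.sub_apply, Matrix.mul_apply, Z2, Z3, unfold2, unfold3,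
      Fintype.sum_prod_type, Finset.mul_sum, Finset.sum_mul]
    congr 1
    rw [sum_rot3]
    refine Finset.sum_congr rfl fun j _ => ?_
    refine Finset.sum_congr rfl fun l _ => ?_
    refine Finset.sum_congr rfl fun i _ => ?_
    ring
  have key : frobSq (Wstar * Z3 Uhat Vhat - unfold3 A)
      = frobSq (Vhat * Z2 Uhat Wstar - unfold2 A) := by
    unfold frobSq
    simp only [Fintype.sum_prod_type]
    rw [sum_rot3]
    refine Finset.sum_congr rfl fun b _ => ?_
    refine Finset.sum_congr rfl fun c _ => ?_
    refine Finset.sum_congr rfl fun a _ => ?_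
    rw [hpt]
  have hb : BddBelow (Set.range fun W : Matrix (Fin n) (Fin k × Fin k) ℝ =>
      frobSq (W * Z3 Uhat Vhat - unfold3 A)) := by
    refine ⟨0, ?_⟩
    rintro x ⟨W, rfl⟩
    exact Finset.sum_nonneg fun i _ => Finset.sum_nonneg fun j _ => sq_nonneg _
  calc (⨅ W : Matrix (Fin n) (Fin k × Fin k) ℝ, frobSq (W * Z3 Uhat Vhat - unfold3 A))
      ≤ frobSq (Wstar * Z3 Uhat Vhat - unfold3 A) := ciInf_le hb Wstar
    _ = _ := key
end
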